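/- For every integer q ≥ 3 and every integer r ≥ 1 there exists a perfect bitrade in the Hamming graph H(qr+1, q) of volume (q!)^r. -/

import Mathlib

open scoped BigOperators

/-- The ball of radius 1 centered at `x` in a graph `G`. -/
def ball1 {V : Type*} (G : SimpleGraph V) (x : V) : Set V := {y | y = x ∨ G.Adj x y}

/-- A perfect one-error-correcting code: the balls of radius 1 centered at the
vertices of `C` partition the vertex set. -/
def IsPerfectCode {V : Type*} (G : SimpleGraph V) (C : Set V) : Prop :=
  ∀ x : V, ∃! c, c ∈ C ∧ c ∈ ball1 G x

/-- A perfect bitrade: a pair of disjoint nonempty vertex sets such that every ball of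
radius 1 contains exactly one vertex of each, or none of either. -/
def IsPerfectBitrade {V : Type*} (G : SimpleGraph V) (T0 T1 : Set V) : Prop :=
  Disjoint T0 T1 ∧ T0.Nonempty ∧ T1.Nonempty ∧
    ∀ x : V,
      ((∃! y, y ∈ T0 ∧ y ∈ ball1 G x) ∧ (∃! y, y ∈ T1 ∧ y ∈ ball1 G x)) ∨
        (∀ y, y ∈ T0 ∪ T1 → y ∉ ball1 G x)

/-- A spherical bitrade: a pair of disjoint nonempty vertex sets such that every sphere of
radius 1 contains exactly one vertex of each, or none of either. -/
def IsSphericalBitrade {V : Type*} (G : SimpleGraph V) (S0 S1 : Set V) : Prop :=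
  Disjoint S0 S1 ∧ S0.Nonempty ∧ S1.Nonempty ∧
    ∀ x : V,
      ((∃! y, y ∈ S0 ∧ G.Adj x y) ∧ (∃! y, y ∈ S1 ∧ G.Adj x y)) ∨
        (∀ y, y ∈ S0 ∪ S1 → ¬ G.Adj x y)

/-- The Hamming graph `H(n,q)`: vertices are `n`-tuples over an alphabet of size `q`,
adjacent iff they differ in exactly one coordinate. -/
def hammingGraph (n q : ℕ) : SimpleGraph (Fin n → Fin q) where
  Adj x y := hammingDist x y = 1
  symm := ⟨fun x y h => by rwa [hammingDist_comm]⟩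
  loopless := ⟨fun x h => by simp [hammingDist_self] at h⟩

/-- `f` is a `μ`-eigenfunction of `G`: `f` is not identically zero and
`μ · f x = ∑_{y ∈ O(x)} f y` for every vertex `x`. -/
def IsEigenfun {V : Type*} (G : SimpleGraph V) (μ : ℝ) (f : V → ℝ) : Prop :=
  f ≠ 0 ∧ ∀ x : V, μ * f x = ∑ᶠ y ∈ G.neighborSet x, f y

/-- The characteristic function of a set of vertices. -/
noncomputable def chi {V : Type*} (C : Set V) : V → ℝ := Set.indicator C 1

/-- The code `C` has minimum (graph) distance exactly `d`. -/
def HasMinDist {V : Type*} (G : SimpleGraph V) (C : Set V) (d : ℕ) : Prop :=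
  (∀ x ∈ C, ∀ y ∈ C, x ≠ y → (d : ℕ∞) ≤ G.edist x y) ∧
    ∃ x ∈ C, ∃ y ∈ C, x ≠ y ∧ G.edist x y = d

/-- The code `C` of `n`-tuples has minimum Hamming distance exactly `d`. -/
def HasMinHDist {n q : ℕ} (C : Set (Fin n → Fin q)) (d : ℕ) : Prop :=
  (∀ x ∈ C, ∀ y ∈ C, x ≠ y → d ≤ hammingDist x y) ∧
    ∃ x ∈ C, ∃ y ∈ C, x ≠ y ∧ hammingDist x y = d

/-- `G` is distance-regular with intersection numbers `p i j k`. -/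
def IsDistRegular {V : Type*} (G : SimpleGraph V) (p : ℕ → ℕ → ℕ → ℕ) : Prop :=
  G.Connected ∧ ∀ (i j k : ℕ) (x y : V), G.edist x y = k →
    {z : V | G.edist x z = i ∧ G.edist z y = j}.ncard = p i j k

/-!
Index the coordinates of `H(qr+1, q)` as `r` blocks of `q` positions plus one check coordinate,
and fix two distinct symbols `a₊ ≠ a₋`. Let `T` be the set of words whose blocks are all
permutations of the alphabet and whose check symbol is `a₊` or `a₋`, and give such a word the
weight `±` (product of the signs of its blocks), with `+` for `a₊`. Every ball of radius 1 meets
`T` in nothing or in exactly two words of opposite weight: if all blocks of the centre are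
permutations, the two words differ from the centre only in the check coordinate; if a block `f`
is not, the words change one symbol of `f`, and the permutations one symbol away from `f` are
`g` and `g * swap j j'`, of opposite signs. So the words of weight `1` and `-1` form a perfect
bitrade, and there are `(q!)^r` words of weight `1`, one for each choice of blocks.
-/

open Equiv Function Finset

section Hamming

variable {ι κ α : Type*} [Fintype ι] [Fintype κ] [DecidableEq α]

def hammingGraphOn (ι α : Type*) [Fintype ι] [DecidableEq α] : SimpleGraph (ι → α) where
  Adj x y := hammingDist x y = 1
  symm := ⟨fun x y h => by rwa [hammingDist_comm]⟩
  loopless := ⟨fun x h => by simp [hammingDist_self] at h⟩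

theorem mem_ball1_hammingGraphOn {x y : ι → α} :
    y ∈ ball1 (hammingGraphOn ι α) x ↔ hammingDist x y ≤ 1 := by
  change y = x ∨ hammingDist x y = 1 ↔ _
  rw [Nat.le_one_iff_eq_zero_or_eq_one, hammingDist_eq_zero, eq_comm]

theorem hammingDist_le_one_iff {x y : ι → α} :
    hammingDist x y ≤ 1 ↔ ∀ i j, x i ≠ y i → x j ≠ y j → i = j := by
  simp only [hammingDist, Finset.card_le_one, mem_filter, mem_univ, true_and]
  exact ⟨fun h i j hi hj => h i hi j hj, fun h i hi j hj => h i j hi hj⟩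

theorem hammingDist_le_one_iff_of_ne {x y : ι → α} {i : ι} (h : x i ≠ y i) :
    hammingDist x y ≤ 1 ↔ ∀ j, j ≠ i → x j = y j := by
  rw [hammingDist_le_one_iff]
  refine ⟨fun H j hj => by_contra fun hne => hj (H j i hne h), fun H j k hj hk => ?_⟩
  rw [not_imp_comm.1 (H j) hj, not_imp_comm.1 (H k) hk]

theorem hammingDist_le_one_of_forall_ne {x y : ι → α} {i : ι} (h : ∀ j, j ≠ i → x j = y j) :
    hammingDist x y ≤ 1 :=
  hammingDist_le_one_iff.2 fun j k hj hk => by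
    rw [not_imp_comm.1 (h j) hj, not_imp_comm.1 (h k) hk]

theorem hammingDist_comp_right_le {x y : κ → α} {g : ι → κ} (hg : Injective g) :
    hammingDist (x ∘ g) (y ∘ g) ≤ hammingDist x y :=
  Finset.card_le_card_of_injOn g (fun i hi => by simpa using hi) hg.injOn

theorem hammingDist_comp_equiv (e : ι ≃ κ) (x y : κ → α) :
    hammingDist (x ∘ e) (y ∘ e) = hammingDist x y := by
  refine (hammingDist_comp_right_le e.injective).antisymm ?_
  simpa [Function.comp_assoc] using
    hammingDist_comp_right_le (x := x ∘ e) (y := y ∘ e) e.symm.injective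

theorem hammingGraph_eq_hammingGraphOn (n q : ℕ) :
    hammingGraph n q = hammingGraphOn (Fin n) (Fin q) :=
  rfl

end Hamming

section SignedPair

variable {V W W' : Type*}

def IsSignedPair (w : W → ℤˣ) (S : Set W) : Prop :=
  ∃ p p', S = {p, p'} ∧ w p' = -w p

theorem IsSignedPair.existsUnique {w : W → ℤˣ} {S : Set W} (h : IsSignedPair w S) (s : ℤˣ) :
    ∃! p, p ∈ S ∧ w p = s := by
  obtain ⟨p, p', rfl, hp'⟩ := h
  have hne : w p ≠ w p' := hp' ▸ units_ne_neg_self (w p)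
  by_cases hs : w p = s
  · refine ⟨p, ⟨Or.inl rfl, hs⟩, ?_⟩
    rintro y ⟨rfl | rfl, hy⟩
    · rfl
    · exact absurd (hs.trans hy.symm) hne
  · have hs' : w p' = s := by rw [hp', ← Int.units_ne_iff_eq_neg.1 (Ne.symm hs)]
    refine ⟨p', ⟨Or.inr rfl, hs'⟩, ?_⟩
    rintro y ⟨rfl | rfl, hy⟩
    · exact absurd hy hs
    · rfl

theorem IsSignedPair.image {w : W → ℤˣ} {w' : W' → ℤˣ} {S : Set W} (h : IsSignedPair w S)
    {φ : W → W'} (c : ℤˣ) (hφ : ∀ p, w' (φ p) = c * w p) : IsSignedPair w' (φ '' S) := by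
  obtain ⟨p, p', rfl, hp'⟩ := h
  exact ⟨φ p, φ p', Set.image_pair φ p p', by rw [hφ, hφ, hp', mul_neg]⟩

theorem isPerfectBitrade_of_isSignedPair (G : SimpleGraph V) {enc : W → V}
    (henc : Injective enc) {w : W → ℤˣ} (hw : Surjective w)
    (hball : ∀ x, enc ⁻¹' ball1 G x = ∅ ∨ IsSignedPair w (enc ⁻¹' ball1 G x)) :
    IsPerfectBitrade G (enc '' {p | w p = 1}) (enc '' {p | w p = -1}) := by
  refine ⟨(Set.disjoint_image_iff henc).2 ?_, Set.Nonempty.image enc (hw 1),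
    Set.Nonempty.image enc (hw (-1)), fun x => ?_⟩
  · exact Disjoint.preimage w (Set.disjoint_singleton.2 (units_ne_neg_self 1))
  rcases hball x with hempty | hpair
  · refine Or.inr ?_
    rintro _ (⟨p, -, rfl⟩ | ⟨p, -, rfl⟩) hp <;>
      exact (Set.eq_empty_iff_forall_notMem.1 hempty) p hp
  · have key : ∀ s, ∃! y, y ∈ enc '' {p | w p = s} ∧ y ∈ ball1 G x := fun s => by
      obtain ⟨p, ⟨hpx, hps⟩, huniq⟩ := hpair.existsUnique s
      refine ⟨enc p, ⟨⟨p, hps, rfl⟩, hpx⟩, ?_⟩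
      rintro _ ⟨⟨p', hp's, rfl⟩, hp'x⟩
      rw [huniq p' ⟨hp'x, hp's⟩]
    exact Or.inl ⟨key 1, key (-1)⟩

end SignedPair

section NearPermutations

variable {α : Type*} [Fintype α] [DecidableEq α]

theorem Equiv.Perm.hammingDist_eq_card_support (σ τ : Perm α) :
    hammingDist ⇑σ ⇑τ = #(σ⁻¹ * τ).support := by
  unfold hammingDist
  congr 1
  ext a
  simp only [mem_filter, mem_univ, true_and, Perm.mem_support, Perm.mul_apply]
  rw [ne_eq, ne_eq, Equiv.Perm.inv_eq_iff_eq, eq_comm]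

theorem Equiv.Perm.eq_of_hammingDist_le_one {σ τ : Perm α}
    (h : hammingDist ⇑σ ⇑τ ≤ 1) : σ = τ := by
  rwa [Perm.hammingDist_eq_card_support, Perm.card_support_le_one, inv_mul_eq_one] at h

theorem Equiv.Perm.eq_of_forall_ne_eq {σ τ : Perm α} {i : α} (h : ∀ j, j ≠ i → σ j = τ j) :
    σ = τ :=
  Perm.eq_of_hammingDist_le_one (hammingDist_le_one_of_forall_ne h)

/-- If `f` is one symbol away from the permutation `g`, say `f j = g j'` with `j' ≠ j`, the
permutations one symbol away from `f` are `g` and `g * swap j j'`, of opposite signs. -/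
theorem isSignedPair_sign_of_not_bijective {f : α → α} (hf : ¬Bijective f)
    (hnear : ∃ g : Perm α, hammingDist f ⇑g ≤ 1) :
    IsSignedPair Perm.sign {σ : Perm α | hammingDist f ⇑σ ≤ 1} := by
  have hdiff : ∀ σ : Perm α, ∃ m, f m ≠ σ m := fun σ => by
    by_contra! H
    exact hf (funext H ▸ σ.bijective)
  obtain ⟨g, hg⟩ := hnear
  obtain ⟨j, hj⟩ := hdiff g
  rw [hammingDist_le_one_iff_of_ne hj] at hg
  set j' := g.symm (f j)
  have hgj' : g j' = f j := g.apply_symm_apply _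
  have hjj' : j' ≠ j := fun h => hj (h ▸ hgj').symm
  have hg' : ∀ k, k ≠ j' → f k = (g * swap j j') k := fun k hk => by
    by_cases hkj : k = j
    · rw [hkj, Perm.mul_apply, swap_apply_left, hgj']
    · rw [Perm.mul_apply, swap_apply_of_ne_of_ne hkj hk, hg k hkj]
  refine ⟨g, g * swap j j', ?_, by rw [Perm.sign_mul, Perm.sign_swap hjj'.symm, mul_neg_one]⟩
  ext σ
  simp only [Set.mem_ofPred_eq, Set.mem_insert_iff, Set.mem_singleton_iff]
  refine ⟨fun hσ => ?_, ?_⟩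
  · obtain ⟨m, hm⟩ := hdiff σ
    rw [hammingDist_le_one_iff_of_ne hm] at hσ
    by_cases hmj : m = j
    · subst hmj
      exact Or.inl (Perm.eq_of_forall_ne_eq fun k hk => by rw [← hσ k hk, hg k hk])
    · have hmj' : m = j' := by
        by_contra hmj'
        exact hjj' (σ.injective (by rw [← hσ j' (Ne.symm hmj'), ← hσ j (Ne.symm hmj),
          hg j' hjj', hgj']))
      subst hmj'
      exact Or.inr (Perm.eq_of_forall_ne_eq fun k hk => by rw [← hσ k hk, hg' k hk])
  · rintro (rfl | rfl)
    · exact hammingDist_le_one_of_forall_ne hg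
    · exact hammingDist_le_one_of_forall_ne hg'

end NearPermutations

section Construction

variable {α β : Type*}

/-- Coordinate `some (b, a)` is position `a` of block `b`, and `none` is a check coordinate
carrying the label `ℓ u` of a sign `u`. -/
def encode (ℓ : ℤˣ → α) (p : (β → Perm α) × ℤˣ) : Option (β × α) → α
  | none => ℓ p.2
  | some (b, a) => p.1 b a

def block (x : Option (β × α) → α) (b : β) : α → α := fun a => x (some (b, a))

theorem encode_injective {ℓ : ℤˣ → α} (hℓ : Injective ℓ) : Injective (encode (β := β) ℓ) := by
  rintro ⟨σ, u⟩ ⟨τ, v⟩ h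
  refine Prod.ext (funext fun b => Equiv.ext fun a => congrFun h (some (b, a))) ?_
  exact hℓ (congrFun h none)

variable [Fintype α] [DecidableEq α] [Fintype β]

def weight (p : (β → Perm α) × ℤˣ) : ℤˣ := p.2 * ∏ b, Perm.sign (p.1 b)

theorem weight_surjective : Surjective (weight (α := α) (β := β)) :=
  fun s => ⟨(1, s), by simp [weight]⟩

theorem ncard_setOf_weight_eq_one :
    {p : (β → Perm α) × ℤˣ | weight p = 1}.ncard = (Fintype.card α).factorial ^ Fintype.card β := by
  have hrange : {p : (β → Perm α) × ℤˣ | weight p = 1} =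
      Set.range fun σ => (σ, (∏ b, Perm.sign (σ b))⁻¹) := by
    ext ⟨σ, u⟩
    simp only [Set.mem_ofPred_eq, Set.mem_range, Prod.mk.injEq, weight, mul_eq_one_iff_eq_inv]
    exact ⟨fun h => ⟨σ, rfl, h.symm⟩, fun ⟨_, h₁, h₂⟩ => h₁ ▸ h₂.symm⟩
  rw [hrange, Set.ncard_range_of_injective fun σ τ h => congrArg Prod.fst h, Nat.card_fun,
    Nat.card_perm, Nat.card_eq_fintype_card, Nat.card_eq_fintype_card]

theorem hammingDist_encode_le_one_iff_of_block_eq (ℓ : ℤˣ → α) {x : Option (β × α) → α}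
    {τ : β → Perm α} (hx : ∀ b, block x b = τ b) {p : (β → Perm α) × ℤˣ} :
    hammingDist x (encode ℓ p) ≤ 1 ↔ p.1 = τ := by
  refine ⟨fun h => funext fun b => Perm.eq_of_hammingDist_le_one ?_, fun h => ?_⟩
  · have hinj : Injective fun a : α => (some (b, a) : Option (β × α)) :=
      (Option.some_injective _).comp (Prod.mk_right_injective b)
    calc hammingDist ⇑(p.1 b) ⇑(τ b) = hammingDist (encode ℓ p ∘ _) (x ∘ _) := by
          rw [← hx b]; rfl
      _ ≤ hammingDist (encode ℓ p) x := hammingDist_comp_right_le hinj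
      _ ≤ 1 := by rwa [hammingDist_comm]
  · refine hammingDist_le_one_of_forall_ne (i := none) ?_
    rintro (_ | ⟨b, a⟩) hne
    · exact absurd rfl hne
    · change x (some (b, a)) = p.1 b a
      rw [h]
      exact congrFun (hx b) a

theorem hammingDist_encode_le_one_iff_of_not_bijective (ℓ : ℤˣ → α) {x : Option (β × α) → α}
    {b₀ : β} (hb₀ : ¬Bijective (block x b₀)) {σ : β → Perm α} {u : ℤˣ} :
    hammingDist x (encode ℓ (σ, u)) ≤ 1 ↔
      (∀ b, b ≠ b₀ → block x b = σ b) ∧ x none = ℓ u ∧ hammingDist (block x b₀) (σ b₀) ≤ 1 := by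
  obtain ⟨a₀, ha₀⟩ : ∃ a, block x b₀ a ≠ σ b₀ a := by
    by_contra! H
    exact hb₀ (funext H ▸ (σ b₀).bijective)
  rw [hammingDist_le_one_iff_of_ne (i := some (b₀, a₀)) ha₀, hammingDist_le_one_iff_of_ne ha₀]
  simp only [Option.forall, Prod.forall, funext_iff, block, encode, ne_eq, reduceCtorEq,
    not_false_eq_true, forall_const, Option.some.injEq, Prod.mk.injEq, not_and]
  refine ⟨fun ⟨hn, h⟩ => ⟨fun b hb a => h b a (absurd · hb), hn, fun a ha => h b₀ a fun _ => ha⟩,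
    fun ⟨hb, hn, h₀⟩ => ⟨hn, fun b a h => ?_⟩⟩
  by_cases hb' : b = b₀
  · subst hb'
    exact h₀ a (h rfl)
  · exact hb b hb' a

theorem isSignedPair_of_block_eq (ℓ : ℤˣ → α) {x : Option (β × α) → α} {τ : β → Perm α}
    (hx : ∀ b, block x b = τ b) :
    IsSignedPair weight {p | hammingDist x (encode ℓ p) ≤ 1} := by
  refine ⟨(τ, 1), (τ, -1), ?_, by simp [weight]⟩
  ext ⟨σ, u⟩
  rw [Set.mem_ofPred_eq, hammingDist_encode_le_one_iff_of_block_eq ℓ hx]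
  rcases Int.units_eq_one_or u with rfl | rfl <;> simp

theorem isSignedPair_of_not_bijective [DecidableEq β] {ℓ : ℤˣ → α} (hℓ : Injective ℓ)
    {x : Option (β × α) → α} {b₀ : β} (hb₀ : ¬Bijective (block x b₀))
    (hne : {p | hammingDist x (encode ℓ p) ≤ 1}.Nonempty) :
    IsSignedPair weight {p | hammingDist x (encode ℓ p) ≤ 1} := by
  obtain ⟨⟨σ₁, u₁⟩, h₁⟩ := hne
  rw [Set.mem_ofPred_eq, hammingDist_encode_le_one_iff_of_not_bijective ℓ hb₀] at h₁
  obtain ⟨hσ₁, hu₁, hnear⟩ := h₁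
  have hS : {p | hammingDist x (encode ℓ p) ≤ 1} = (fun σ₀ => (update σ₁ b₀ σ₀, u₁)) ''
      {σ₀ : Perm α | hammingDist (block x b₀) σ₀ ≤ 1} := by
    ext ⟨σ, u⟩
    simp only [Set.mem_ofPred_eq, Set.mem_image, Prod.mk.injEq,
      hammingDist_encode_le_one_iff_of_not_bijective ℓ hb₀]
    constructor
    · rintro ⟨hσ, hu, hn⟩
      refine ⟨σ b₀, hn, funext fun b => ?_, hℓ (hu₁.symm.trans hu)⟩
      by_cases hb : b = b₀
      · rw [hb, update_self]
      · rw [update_of_ne hb]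
        exact DFunLike.coe_injective ((hσ₁ b hb).symm.trans (hσ b hb))
    · rintro ⟨σ₀, hn, rfl, rfl⟩
      exact ⟨fun b hb => by rw [update_of_ne hb]; exact hσ₁ b hb, hu₁, by rwa [update_self]⟩
  rw [hS]
  refine (isSignedPair_sign_of_not_bijective hb₀ ⟨σ₁ b₀, hnear⟩).image
    (u₁ * ∏ b ∈ univ.erase b₀, Perm.sign (σ₁ b)) fun σ₀ => ?_
  dsimp only [weight]
  rw [← mul_prod_erase univ _ (mem_univ b₀), update_self,
    prod_congr rfl fun b hb => by rw [update_of_ne (ne_of_mem_erase hb)]]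
  ac_rfl

theorem eq_empty_or_isSignedPair_setOf_hammingDist_encode_le_one [DecidableEq β] {ℓ : ℤˣ → α}
    (hℓ : Injective ℓ) (x : Option (β × α) → α) :
    {p | hammingDist x (encode ℓ p) ≤ 1} = ∅ ∨
      IsSignedPair weight {p | hammingDist x (encode ℓ p) ≤ 1} := by
  by_cases hx : ∀ b, Bijective (block x b)
  · exact Or.inr (isSignedPair_of_block_eq ℓ (τ := fun b => Equiv.ofBijective _ (hx b))
      fun _ => rfl)
  · obtain ⟨b₀, hb₀⟩ := not_forall.1 hx
    exact (Set.eq_empty_or_nonempty _).imp_right (isSignedPair_of_not_bijective hℓ hb₀)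

theorem exists_isPerfectBitrade_hammingGraphOn [DecidableEq β] {ι : Type*} [Fintype ι]
    (e : ι ≃ Option (β × α)) (ℓ : ℤˣ ↪ α) :
    ∃ T₀ T₁ : Set (ι → α), IsPerfectBitrade (hammingGraphOn ι α) T₀ T₁ ∧
      T₀.ncard = (Fintype.card α).factorial ^ Fintype.card β := by
  set enc := fun p => encode ℓ p ∘ e
  have henc : Injective enc := e.surjective.injective_comp_right.comp (encode_injective ℓ.injective)
  have hball : ∀ x, enc ⁻¹' ball1 (hammingGraphOn ι α) x =
      {p | hammingDist (x ∘ e.symm) (encode ℓ p) ≤ 1} := fun x => by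
    ext p
    rw [Set.mem_preimage, mem_ball1_hammingGraphOn, Set.mem_ofPred_eq,
      ← hammingDist_comp_equiv e, Function.comp_assoc, e.symm_comp_self, Function.comp_id]
  refine ⟨_, _, isPerfectBitrade_of_isSignedPair _ henc weight_surjective fun x => ?_, ?_⟩
  · rw [hball]
    exact eq_empty_or_isSignedPair_setOf_hammingDist_encode_le_one ℓ.injective _
  · rw [Set.ncard_image_of_injective _ henc, ncard_setOf_weight_eq_one]

end Construction

theorem statement12_general (q r : ℕ) (hq : 3 ≤ q) :
    ∃ T0 T1 : Set (Fin (q * r + 1) → Fin q),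
      IsPerfectBitrade (hammingGraph (q * r + 1) q) T0 T1 ∧
        T0.ncard = (Nat.factorial q) ^ r := by
  obtain ⟨ℓ⟩ : Nonempty (ℤˣ ↪ Fin q) :=
    Function.Embedding.nonempty_of_card_le (by simp [Fintype.card_units_int]; omega)
  have e : Fin (q * r + 1) ≃ Option (Fin r × Fin q) :=
    Fintype.equivOfCardEq (by simp [mul_comm])
  rw [hammingGraph_eq_hammingGraphOn]
  obtain ⟨T₀, T₁, hT, hcard⟩ := exists_isPerfectBitrade_hammingGraphOn e ℓ
  exact ⟨T₀, T₁, hT, by simpa using hcard⟩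

/-- For every `q ≥ 3` and `r ≥ 1` there is a perfect bitrade in `H(qr+1,q)`
of volume `(q!)^r`. -/
theorem statement12 (q r : ℕ) (hq : 3 ≤ q) (hr : 1 ≤ r) :
    ∃ T0 T1 : Set (Fin (q * r + 1) → Fin q),
      IsPerfectBitrade (hammingGraph (q * r + 1) q) T0 T1 ∧
        T0.ncard = (Nat.factorial q) ^ r :=
  statement12_general q r hq
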